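/- Let (Ω, P) be a probability space and let u : Ω → ℝ^n and v : Ω → ℝ^M be random vectors such that all entrywise products u_i u_j, u_i v_k, and v_k v_l are integrable. Set S = E[v vᵀ], let Φ ∈ ℝ^{M×n} satisfy Φᵀ = E[u vᵀ], and assume S is invertible. For a matrix L ∈ ℝ^{M×n}, define m = Lᵀ v and d = u − m. Then E[m mᵀ] + E[m dᵀ] + E[d mᵀ] = Φᵀ S⁻¹ Φ − (S⁻¹Φ − L)ᵀ S (S⁻¹Φ − L). -/

import Mathlib

/-!
Since `d = u - m`, the left side is `E[m uᵀ] + E[u mᵀ] - E[m mᵀ]`, and linearity of expectation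
turns this into `Lᵀ Φ + Φᵀ L - Lᵀ S L`. Expanding the right side, with `S` symmetric, gives the
same matrix.
-/

open MeasureTheory Matrix

namespace Matrix

variable {ι κ : Type*} [Fintype κ] [DecidableEq κ]

theorem transpose_mul_inv_mul_sub_transpose_mul_mul_eq (S : Matrix κ κ ℝ) (Φ L : Matrix κ ι ℝ)
    (hS : IsUnit S) (hSsymm : Sᵀ = S) :
    Φᵀ * S⁻¹ * Φ - (S⁻¹ * Φ - L)ᵀ * S * (S⁻¹ * Φ - L) = Φᵀ * L + Lᵀ * Φ - Lᵀ * S * L := by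
  have hdet : IsUnit S.det := (isUnit_iff_isUnit_det S).mp hS
  have hinv_symm : S⁻¹ᵀ = S⁻¹ := by rw [transpose_nonsing_inv, hSsymm]
  rw [transpose_sub, transpose_mul, hinv_symm]
  simp only [Matrix.sub_mul, Matrix.mul_sub, Matrix.mul_assoc,
    nonsing_inv_mul_cancel_left _ _ hdet, mul_nonsing_inv_cancel_left _ _ hdet]
  abel

end Matrix

namespace ProbabilityTheory

variable {Ω α β γ : Type*} [MeasurableSpace Ω] (P : Measure Ω)

noncomputable def crossMoment (x : Ω → α → ℝ) (y : Ω → β → ℝ) : Matrix α β ℝ :=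
  Matrix.of fun i j => ∫ ω, x ω i * y ω j ∂P

variable {P}

theorem crossMoment_transpose (x : Ω → α → ℝ) (y : Ω → β → ℝ) :
    (crossMoment P x y)ᵀ = crossMoment P y x := by
  ext i j
  simp only [crossMoment, transpose_apply, of_apply, mul_comm]

theorem integrable_mulVec_mul [Fintype β] {x : Ω → β → ℝ} {y : Ω → γ → ℝ}
    (hxy : ∀ k j, Integrable (fun ω => x ω k * y ω j) P) (A : Matrix α β ℝ) (i : α) (j : γ) :
    Integrable (fun ω => (A *ᵥ x ω) i * y ω j) P := by
  simp only [mulVec, dotProduct, Finset.sum_mul, mul_assoc]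
  exact integrable_finsetSum _ fun k _ => (hxy k j).const_mul _

theorem integrable_mul_mulVec [Fintype β] {x : Ω → γ → ℝ} {y : Ω → β → ℝ}
    (hxy : ∀ i k, Integrable (fun ω => x ω i * y ω k) P) (B : Matrix α β ℝ) (i : γ) (j : α) :
    Integrable (fun ω => x ω i * (B *ᵥ y ω) j) P := by
  simpa only [mul_comm] using
    integrable_mulVec_mul (fun k i => by simpa only [mul_comm] using hxy i k) B j i

theorem crossMoment_mulVec_left [Fintype β] {x : Ω → β → ℝ} {y : Ω → γ → ℝ}
    (hxy : ∀ k j, Integrable (fun ω => x ω k * y ω j) P) (A : Matrix α β ℝ) :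
    crossMoment P (fun ω => A *ᵥ x ω) y = A * crossMoment P x y := by
  ext i j
  simp only [crossMoment, of_apply, mul_apply, mulVec, dotProduct, Finset.sum_mul, mul_assoc]
  rw [integral_finsetSum _ fun k _ => (hxy k j).const_mul _]
  simp only [integral_const_mul]

theorem crossMoment_mulVec_right [Fintype β] {x : Ω → γ → ℝ} {y : Ω → β → ℝ}
    (hxy : ∀ i k, Integrable (fun ω => x ω i * y ω k) P) (B : Matrix α β ℝ) :
    crossMoment P x (fun ω => B *ᵥ y ω) = crossMoment P x y * Bᵀ := by
  have hyx : ∀ k i, Integrable (fun ω => y ω k * x ω i) P := fun k i => by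
    simpa only [mul_comm] using hxy i k
  rw [← crossMoment_transpose, crossMoment_mulVec_left hyx, transpose_mul,
    crossMoment_transpose]

theorem crossMoment_sub_right {x : Ω → α → ℝ} {y z : Ω → β → ℝ}
    (hxy : ∀ i j, Integrable (fun ω => x ω i * y ω j) P)
    (hxz : ∀ i j, Integrable (fun ω => x ω i * z ω j) P) :
    crossMoment P x (y - z) = crossMoment P x y - crossMoment P x z := by
  ext i j
  simp only [crossMoment, of_apply, Matrix.sub_apply, Pi.sub_apply, mul_sub]
  exact integral_sub (hxy i j) (hxz i j)

theorem crossMoment_sub_left {x y : Ω → α → ℝ} {z : Ω → β → ℝ}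
    (hxz : ∀ i j, Integrable (fun ω => x ω i * z ω j) P)
    (hyz : ∀ i j, Integrable (fun ω => y ω i * z ω j) P) :
    crossMoment P (x - y) z = crossMoment P x z - crossMoment P y z := by
  ext i j
  simp only [crossMoment, of_apply, Matrix.sub_apply, Pi.sub_apply, sub_mul]
  exact integral_sub (hxz i j) (hyz i j)

end ProbabilityTheory

open ProbabilityTheory

theorem lemma2_probabilistic_general
    {Ω : Type*} [MeasurableSpace Ω] (P : Measure Ω)
    {n M : ℕ} (u : Ω → Fin n → ℝ) (v : Ω → Fin M → ℝ)
    (huv : ∀ i k, Integrable (fun ω => u ω i * v ω k) P)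
    (hvv : ∀ k l, Integrable (fun ω => v ω k * v ω l) P)
    (S : Matrix (Fin M) (Fin M) ℝ) (Φ L : Matrix (Fin M) (Fin n) ℝ)
    (hS : S = Matrix.of fun k l => ∫ ω, v ω k * v ω l ∂P)
    (hΦ : Φᵀ = Matrix.of fun i k => ∫ ω, u ω i * v ω k ∂P)
    (hSinv : IsUnit S)
    (m d : Ω → Fin n → ℝ)
    (hm : ∀ ω, m ω = Lᵀ.mulVec (v ω))
    (hd : ∀ ω, d ω = u ω - m ω) :
    (Matrix.of fun i j => ∫ ω, m ω i * m ω j ∂P) +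
    (Matrix.of fun i j => ∫ ω, m ω i * d ω j ∂P) +
    (Matrix.of fun i j => ∫ ω, d ω i * m ω j ∂P) =
      Φᵀ * S⁻¹ * Φ - (S⁻¹ * Φ - L)ᵀ * S * (S⁻¹ * Φ - L) := by
  obtain rfl : d = u - m := funext hd
  obtain rfl : m = fun ω => Lᵀ *ᵥ v ω := funext hm
  change S = crossMoment P v v at hS
  change Φᵀ = crossMoment P u v at hΦ
  have hvu : ∀ k i, Integrable (fun ω => v ω k * u ω i) P := fun k i => by
    simpa only [mul_comm] using huv i k
  have hmm := integrable_mul_mulVec (integrable_mulVec_mul hvv Lᵀ) Lᵀ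
  have hmu := integrable_mulVec_mul hvu Lᵀ
  have hum := integrable_mul_mulVec huv Lᵀ
  have hEmm : crossMoment P (fun ω => Lᵀ *ᵥ v ω) (fun ω => Lᵀ *ᵥ v ω) = Lᵀ * S * L := by
    rw [crossMoment_mulVec_left (integrable_mul_mulVec hvv Lᵀ), crossMoment_mulVec_right hvv,
      hS, transpose_transpose, Matrix.mul_assoc]
  have hEmu : crossMoment P (fun ω => Lᵀ *ᵥ v ω) u = Lᵀ * Φ := by
    rw [crossMoment_mulVec_left hvu, ← crossMoment_transpose, ← hΦ, transpose_transpose]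
  have hEum : crossMoment P u (fun ω => Lᵀ *ᵥ v ω) = Φᵀ * L := by
    rw [crossMoment_mulVec_right huv, hΦ, transpose_transpose]
  have hSsymm : Sᵀ = S := by rw [hS, crossMoment_transpose]
  change crossMoment P _ _ + crossMoment P _ (u - _) + crossMoment P (u - _) _ = _
  rw [crossMoment_sub_right hmu hmm, crossMoment_sub_left hum hmm, hEmm, hEmu, hEum,
    transpose_mul_inv_mul_sub_transpose_mul_mul_eq S Φ L hSinv hSsymm]
  abel

/-- Lemma 2 in probabilistic form: with m = Lᵀv and d = u − m,
E[mmᵀ] + E[mdᵀ] + E[dmᵀ] = Φᵀ S⁻¹ Φ − (S⁻¹Φ − L)ᵀ S (S⁻¹Φ − L). -/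
theorem lemma2_probabilistic
    {Ω : Type*} [MeasurableSpace Ω] (P : Measure Ω) [IsProbabilityMeasure P]
    {n M : ℕ} (u : Ω → Fin n → ℝ) (v : Ω → Fin M → ℝ)
    (huu : ∀ i j, Integrable (fun ω => u ω i * u ω j) P)
    (huv : ∀ i k, Integrable (fun ω => u ω i * v ω k) P)
    (hvv : ∀ k l, Integrable (fun ω => v ω k * v ω l) P)
    (S : Matrix (Fin M) (Fin M) ℝ) (Φ L : Matrix (Fin M) (Fin n) ℝ)
    (hS : S = Matrix.of fun k l => ∫ ω, v ω k * v ω l ∂P)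
    (hΦ : Φᵀ = Matrix.of fun i k => ∫ ω, u ω i * v ω k ∂P)
    (hSinv : IsUnit S)
    (m d : Ω → Fin n → ℝ)
    (hm : ∀ ω, m ω = Lᵀ.mulVec (v ω))
    (hd : ∀ ω, d ω = u ω - m ω) :
    (Matrix.of fun i j => ∫ ω, m ω i * m ω j ∂P) +
    (Matrix.of fun i j => ∫ ω, m ω i * d ω j ∂P) +
    (Matrix.of fun i j => ∫ ω, d ω i * m ω j ∂P) =
      Φᵀ * S⁻¹ * Φ - (S⁻¹ * Φ - L)ᵀ * S * (S⁻¹ * Φ - L) :=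
  lemma2_probabilistic_general P u v huv hvv S Φ L hS hΦ hSinv m d hm hd
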